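/- Let S = (F_{p^n},+,⋆) be a finite presemifield with x⋆y = F(x,y) additive in each argument, let F_q be a subfield of F_{p^n}, and suppose there exists a field automorphism σ of F_q such that F(λx, y) = σ(λ)·F(x,y) for all x,y ∈ F_{p^n} and all λ ∈ F_q (F is F_q-semilinear in x). Then for every λ ∈ F_q the scalar map t_λ : x ↦ λx belongs to the left-nucleus set N_l(S) := N_r(C^d) = {ν ∈ End_{F_p}(F_{p^n}) : ν∘ψ ∈ C^d for all ψ ∈ C^d}, and every element of N_l(S) is F_q-linear. -/

import Mathlib

/-!
Every scalar `t_λ` lies in `N_l(S)` because `λ (x ⋆ y) = (σ⁻¹(λ) x) ⋆ y`. Moreover, `N_l(S)` is a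
subring of `End(S)` without zero divisors: for `e ≠ 0` and `ν ∈ N_l(S)` nonzero, `ν ∘ φ^e = φ^b` with
`b ≠ 0`, so `ν` is injective. A finite domain is a field (Wedderburn), so every `ν ∈ N_l(S)`
commutes with every `t_λ`, i.e. is `F_q`-linear.
-/

structure Presemifield (p : ℕ) (S : Type*) [AddCommGroup S] [Module (ZMod p) S] where
  mul : S →ₗ[ZMod p] S →ₗ[ZMod p] S
  eq_zero_or_eq_zero : ∀ x y : S, mul x y = 0 → x = 0 ∨ y = 0

def Presemifield.dualSpread {p : ℕ} {S : Type*} [AddCommGroup S] [Module (ZMod p) S]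
    (M : Presemifield p S) : Set (S →ₗ[ZMod p] S) :=
  Set.range M.mul

def rightNucleusSet {p : ℕ} {S : Type*} [AddCommGroup S] [Module (ZMod p) S]
    (D : Set (S →ₗ[ZMod p] S)) : Set (S →ₗ[ZMod p] S) :=
  {ν | ∀ ψ ∈ D, ν ∘ₗ ψ ∈ D}

namespace Presemifield

section Module

variable {p : ℕ} {S : Type*} [AddCommGroup S] [Module (ZMod p) S] (M : Presemifield p S)

theorem mul_injective {x : S} (hx : x ≠ 0) : Function.Injective (M.mul x) :=
  (injective_iff_map_eq_zero _).2 fun y hy => (M.eq_zero_or_eq_zero x y hy).resolve_left hx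

def leftNucleus : Subring (Module.End (ZMod p) S) where
  carrier := rightNucleusSet M.dualSpread
  zero_mem' _ _ := ⟨0, by ext; simp⟩
  one_mem' _ hψ := hψ
  add_mem' := by
    rintro a b ha hb ψ hψ
    obtain ⟨u, hu⟩ := ha ψ hψ
    obtain ⟨v, hv⟩ := hb ψ hψ
    exact ⟨u + v, by ext; simp [hu, hv]⟩
  neg_mem' := by
    rintro a ha ψ hψ
    obtain ⟨u, hu⟩ := ha ψ hψ
    exact ⟨-u, by ext; simp [hu]⟩
  mul_mem' ha hb ψ hψ := ha _ (hb ψ hψ)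

variable [Finite S] [Nontrivial S]

theorem injective_of_mem_rightNucleusSet {ν : Module.End (ZMod p) S}
    (hν : ν ∈ rightNucleusSet M.dualSpread) (hν0 : ν ≠ 0) : Function.Injective ν := by
  obtain ⟨e, he⟩ := exists_ne (0 : S)
  obtain ⟨b, hb⟩ := hν (M.mul e) ⟨e, rfl⟩
  have he_surj : Function.Surjective (M.mul e) :=
    Finite.injective_iff_surjective.1 (M.mul_injective he)
  have hb0 : b ≠ 0 := by
    rintro rfl
    exact hν0 ((LinearMap.cancel_right he_surj).1 (by simp [← hb]))
  have hcomp : Function.Injective (ν ∘ M.mul e) := by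
    rw [← LinearMap.coe_comp, ← hb]
    exact M.mul_injective hb0
  exact hcomp.of_comp_right he_surj

instance : NoZeroDivisors M.leftNucleus where
  eq_zero_or_eq_zero_of_mul_eq_zero {a b} hab := by
    refine or_iff_not_imp_right.2 fun hb => Subtype.ext ?_
    have hb_surj : Function.Surjective (b : Module.End (ZMod p) S) :=
      Finite.injective_iff_surjective.1
        (M.injective_of_mem_rightNucleusSet b.2 fun h => hb (Subtype.ext h))
    refine (LinearMap.cancel_right hb_surj).1 ?_
    simpa [Subtype.ext_iff, Module.End.mul_eq_comp] using hab

instance : IsDomain M.leftNucleus := NoZeroDivisors.to_isDomain _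

theorem comp_comm_of_mem_rightNucleusSet {μ ν : Module.End (ZMod p) S}
    (hμ : μ ∈ rightNucleusSet M.dualSpread) (hν : ν ∈ rightNucleusSet M.dualSpread) :
    μ ∘ₗ ν = ν ∘ₗ μ := by
  have : Finite (Module.End (ZMod p) S) := Finite.of_injective _ DFunLike.coe_injective
  exact congrArg Subtype.val
    ((Finite.isDomain_to_isField M.leftNucleus).mul_comm ⟨μ, hμ⟩ ⟨ν, hν⟩)

end Module

theorem mulLeft_mem_rightNucleusSet {p : ℕ} {S : Type*} [Ring S] [Algebra (ZMod p) S]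
    (M : Presemifield p S) {a c : S} (h : ∀ x y, M.mul (c * x) y = a * M.mul x y) :
    LinearMap.mulLeft (ZMod p) a ∈ rightNucleusSet M.dualSpread := by
  rintro _ ⟨x, rfl⟩
  exact ⟨c * x, LinearMap.ext fun y => h x y⟩

end Presemifield

theorem statement10_general (p n : ℕ) [Fact p.Prime]
    (M : Presemifield p (GaloisField p n))
    (K : Subfield (GaloisField p n)) (σ : K ≃+* K)
    (hσ : ∀ (l : K) (x y : GaloisField p n),
      M.mul ((l : GaloisField p n) * x) y = (σ l : GaloisField p n) * M.mul x y) :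
    (∀ l : K, LinearMap.mulLeft (ZMod p) (l : GaloisField p n) ∈
      rightNucleusSet M.dualSpread) ∧
    (∀ ν ∈ rightNucleusSet M.dualSpread, ∀ (l : K) (x : GaloisField p n),
      ν ((l : GaloisField p n) * x) = (l : GaloisField p n) * ν x) := by
  have hK (l : K) : LinearMap.mulLeft (ZMod p) (l : GaloisField p n) ∈
      rightNucleusSet M.dualSpread :=
    M.mulLeft_mem_rightNucleusSet fun x y => by simpa using hσ (σ.symm l) x y
  refine ⟨hK, fun ν hν l x => ?_⟩
  simpa using LinearMap.congr_fun (M.comp_comm_of_mem_rightNucleusSet hν (hK l)) x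

theorem statement10 (p n : ℕ) [Fact p.Prime] (hn : n ≠ 0)
    (M : Presemifield p (GaloisField p n))
    (K : Subfield (GaloisField p n)) (σ : K ≃+* K)
    (hσ : ∀ (l : K) (x y : GaloisField p n),
      M.mul ((l : GaloisField p n) * x) y = (σ l : GaloisField p n) * M.mul x y) :
    (∀ l : K, LinearMap.mulLeft (ZMod p) (l : GaloisField p n) ∈
      rightNucleusSet M.dualSpread) ∧
    (∀ ν ∈ rightNucleusSet M.dualSpread, ∀ (l : K) (x : GaloisField p n),
      ν ((l : GaloisField p n) * x) = (l : GaloisField p n) * ν x) :=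
  statement10_general p n M K σ hσ
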